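/- arXiv:2403.16670 — 2 statements merged into one kernel-verified Lean document; each statement's English description precedes it below -/
import Mathlib

section
/- For all nonnegative integers m and n, the probabilistic bivariate Bell polynomials satisfy the recurrence φ_{m+n}^Y(x,y) = Σ_{k=0}^{n} Σ_{j=0}^{m} C(m,j) · φ_j^Y(x−k, y) · (x)_k · y^k · (1/k!) · Σ_{l_1+⋯+l_k=n, l_i≥1} (n!/(l_1!⋯l_k!)) · E[S_k^{m−j} · ∏_{i=1}^{k} Y_i^{l_i}], where the inner sum is over all k-tuples (l_1,…,l_k) of positive integers with l_1+⋯+l_k = n (the empty sum for k=0 being nonzero only when n=0, in which case it equals 1). -/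
open MeasureTheory ProbabilityTheory Finset

noncomputable section

variable {Ω : Type*} [MeasureSpace Ω]

/-- The falling factorial `(x)_k = x (x-1) ⋯ (x-k+1)`. -/
def fallFac (x : ℝ) (k : ℕ) : ℝ := ∏ i ∈ Finset.range k, (x - (i : ℝ))

/-- Partial sums `S_k = Y_1 + ⋯ + Y_k` (with `S_0 = 0`). -/
def S (Y : ℕ → Ω → ℝ) (k : ℕ) (ω : Ω) : ℝ := ∑ i ∈ Finset.range k, Y i ω

/-- The probabilistic Stirling numbers of the second kind associated with `Y`:
`{n brace k}_Y = (1/k!) ∑_{i=0}^{k} C(k,i) (−1)^{k−i} E[S_i^n]`. -/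
def probStirling (Y : ℕ → Ω → ℝ) (n k : ℕ) : ℝ :=
  ((k.factorial : ℝ))⁻¹ *
    ∑ i ∈ Finset.range (k + 1), (k.choose i : ℝ) * (-1) ^ (k - i) * ∫ ω, (S Y i ω) ^ n

/-- The probabilistic bivariate Bell polynomials associated with `Y`:
`φ_n^Y(x,y) = ∑_{k=0}^{n} {n brace k}_Y (x)_k y^k`. -/
def phiBiv (Y : ℕ → Ω → ℝ) (n : ℕ) (x y : ℝ) : ℝ :=
  ∑ k ∈ Finset.range (n + 1), probStirling Y n k * fallFac x k * y ^ k

/-- k-tuples of positive integers summing to `j`. -/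
def posTuples (k j : ℕ) : Finset (Fin k → ℕ) :=
  (Finset.Nat.antidiagonalTuple k j).filter fun l => ∀ i, 0 < l i

open scoped fwdDiff Nat

/-!
With `f_n i = E[S_i ^ n]` one has `{n brace k}_Y = Δ^k f_n (0) / k!`, so `φ_n^Y(x, y)` is the
Newton series `∑_k Δ^k f_n (0) (x)_k y^k / k!` of `f_n`. Expanding `S_i ^ n` multinomially,
grouping the monomials by the set `A` of indices that occur in them, splitting
`S_i = ∑_{a ∉ A} Y_a + ∑_{a ∈ A} Y_a` binomially and using independence and exchangeability gives
`f_{m+n} i = ∑_{k, j} C(m, j) D_{k,j} C(i, k) f_j (i - k)`, with `D_{k,j}` the innermost sum of the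
theorem. The Newton series of `i ↦ C(i, k) g (i - k)` is `(x)_k y^k / k!` times that of `g` at
`x - k`, and `f_j` has no differences of order `> j`, so the term `(k, j)` becomes
`C(m, j) D_{k,j} (x)_k y^k φ_j^Y(x - k, y) / k!`.
-/

lemma fwdDiff_iter_apply_zero (f : ℕ → ℝ) (K : ℕ) :
    (Δ_[1])^[K] f 0 = ∑ i ∈ range (K + 1), (-1) ^ (K - i) * (K.choose i : ℝ) * f i := by
  simp [fwdDiff_iter_eq_sum_shift, zsmul_eq_mul]

lemma fwdDiff_iter_choose_mul_apply_zero (g : ℕ → ℝ) (K k : ℕ) :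
    (Δ_[1])^[K] (fun i ↦ (i.choose k : ℝ) * g (i - k)) 0 =
      K.choose k * (Δ_[1])^[K - k] g 0 := by
  simp only [fwdDiff_iter_apply_zero]
  rcases lt_or_ge K k with hK | hk
  · rw [Nat.choose_eq_zero_of_lt hK, Nat.cast_zero, zero_mul]
    refine sum_eq_zero fun i hi ↦ ?_
    rw [Nat.choose_eq_zero_of_lt (by have := mem_range.1 hi; omega : i < k)]
    simp
  obtain ⟨p, rfl⟩ := Nat.exists_eq_add_of_le hk
  rw [show k + p + 1 = k + (p + 1) by ring, sum_range_add, mul_sum,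
    sum_eq_zero fun i hi ↦ by simp [Nat.choose_eq_zero_of_lt (mem_range.1 hi)], zero_add,
    Nat.add_sub_cancel_left]
  refine sum_congr rfl fun i hi ↦ ?_
  have hi : i ≤ p := Nat.lt_succ_iff.1 (mem_range.1 hi)
  have hchoose :
      ((k + p).choose (k + i) : ℝ) * (k + i).choose k = (k + p).choose k * p.choose i := by
    have := Nat.choose_mul (n := k + p) (Nat.le_add_right k i)
    simp only [Nat.add_sub_cancel_left] at this
    exact_mod_cast this
  rw [show k + p - (k + i) = p - i by omega, Nat.add_sub_cancel_left]
  linear_combination (-1) ^ (p - i) * g i * hchoose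

lemma fwdDiff_iter_choose_apply_zero_of_lt {k K : ℕ} (hkK : k < K) :
    (Δ_[1])^[K] (fun i ↦ (i.choose k : ℝ)) 0 = 0 := by
  have h := fwdDiff_iter_choose_mul_apply_zero (fun _ ↦ 1) K k
  simp only [mul_one] at h
  rw [h, show K - k = K - k - 1 + 1 by omega, Function.iterate_succ_apply, fwdDiff_const,
    Function.iterate_fixed (fwdDiff_const (1 : ℕ) (0 : ℝ)), mul_zero]

lemma fallFac_add (x : ℝ) (k p : ℕ) : fallFac x (k + p) = fallFac x k * fallFac (x - k) p := by
  simp only [fallFac, prod_range_add]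
  congr 1
  exact prod_congr rfl fun i _ ↦ by push_cast; ring

def newtonSum (f : ℕ → ℝ) (N : ℕ) (x y : ℝ) : ℝ :=
  ∑ K ∈ range (N + 1), (K ! : ℝ)⁻¹ * (Δ_[1])^[K] f 0 * fallFac x K * y ^ K

lemma newtonSum_sum {α : Type*} (s : Finset α) (f : α → ℕ → ℝ) (N : ℕ) (x y : ℝ) :
    newtonSum (fun i ↦ ∑ a ∈ s, f a i) N x y = ∑ a ∈ s, newtonSum (f a) N x y := by
  simp only [newtonSum, fwdDiff_iter_apply_zero, mul_sum, sum_mul]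
  rw [sum_comm]
  refine sum_congr rfl fun K _ ↦ ?_
  rw [sum_comm]

lemma newtonSum_const_mul (c : ℝ) (f : ℕ → ℝ) (N : ℕ) (x y : ℝ) :
    newtonSum (fun i ↦ c * f i) N x y = c * newtonSum f N x y := by
  simp only [newtonSum, fwdDiff_iter_apply_zero, mul_sum, sum_mul]
  exact sum_congr rfl fun _ _ ↦ sum_congr rfl fun _ _ ↦ by ring

lemma newtonSum_eq_of_le (f : ℕ → ℝ) {d N : ℕ} (hdN : d ≤ N)
    (hf : ∀ K, d < K → (Δ_[1])^[K] f 0 = 0) (x y : ℝ) :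
    newtonSum f N x y = newtonSum f d x y := by
  refine (sum_subset (range_subset_range.2 (by omega)) fun K _ hK ↦ ?_).symm
  rw [hf K (by simpa using hK)]
  ring

lemma newtonSum_choose_mul (g : ℕ → ℝ) {k N : ℕ} (hk : k ≤ N) (x y : ℝ) :
    newtonSum (fun i ↦ (i.choose k : ℝ) * g (i - k)) N x y =
      (k ! : ℝ)⁻¹ * fallFac x k * y ^ k * newtonSum g (N - k) (x - k) y := by
  obtain ⟨p, rfl⟩ := Nat.exists_eq_add_of_le hk
  simp only [newtonSum, fwdDiff_iter_choose_mul_apply_zero]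
  rw [show k + p + 1 = k + (p + 1) by ring, sum_range_add,
    sum_eq_zero fun K hK ↦ by simp [Nat.choose_eq_zero_of_lt (mem_range.1 hK)], zero_add,
    Nat.add_sub_cancel_left, mul_sum]
  refine sum_congr rfl fun i _ ↦ ?_
  rw [Nat.add_sub_cancel_left, fallFac_add, pow_add, Nat.cast_add_choose]
  field_simp

lemma probStirling_eq_fwdDiff (Y : ℕ → Ω → ℝ) (n k : ℕ) :
    probStirling Y n k = (k ! : ℝ)⁻¹ * (Δ_[1])^[k] (fun i ↦ moment (S Y i) n volume) 0 := by
  simp only [probStirling, fwdDiff_iter_apply_zero, moment, Pi.pow_apply]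
  exact congrArg _ (sum_congr rfl fun _ _ ↦ by ring)

lemma phiBiv_eq_newtonSum (Y : ℕ → Ω → ℝ) (n : ℕ) (x y : ℝ) :
    phiBiv Y n x y = newtonSum (fun i ↦ moment (S Y i) n volume) n x y := by
  simp only [phiBiv, newtonSum, probStirling_eq_fwdDiff]

lemma sum_range_eq_sum_range_of_eq_zero {M : Type*} [AddCommMonoid M] {f : ℕ → M} {a b : ℕ}
    (hf : ∀ k, min a b < k → f k = 0) :
    ∑ k ∈ range (a + 1), f k = ∑ k ∈ range (b + 1), f k := by
  have h : ∀ c, min a b ≤ c → ∑ k ∈ range (c + 1), f k = ∑ k ∈ range (min a b + 1), f k :=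
    fun c hc ↦ (sum_subset (range_subset_range.2 (by omega)) fun k _ hk ↦
      hf k (by simp at hk; omega)).symm
  rw [h a (min_le_left a b), h b (min_le_right a b)]

@[to_additive]
lemma Finset.prod_orderEmbOfFin {α M : Type*} [LinearOrder α] [CommMonoid M] (A : Finset α)
    (f : α → M) : ∏ t, f (A.orderEmbOfFin rfl t) = ∏ a ∈ A, f a := by
  conv_rhs => rw [← A.map_orderEmbOfFin_univ rfl, prod_map]
  rfl

lemma Nat.multinomial_comp_orderEmbOfFin {α : Type*} [LinearOrder α] (A : Finset α)
    (f : α → ℕ) : Nat.multinomial univ (f ∘ A.orderEmbOfFin rfl) = Nat.multinomial A f := by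
  simp only [Nat.multinomial, Function.comp_apply]
  rw [sum_orderEmbOfFin A f, prod_orderEmbOfFin A fun a ↦ (f a)!]

lemma posTuples_eq_empty {k n : ℕ} (h : n < k) : posTuples k n = ∅ := by
  refine eq_empty_of_forall_notMem fun l hl ↦ ?_
  simp only [posTuples, mem_filter, Finset.Nat.mem_antidiagonalTuple] at hl
  have : ∑ _t : Fin k, 1 ≤ ∑ t, l t := sum_le_sum fun t _ ↦ hl.2 t
  simp only [sum_const, card_univ, Fintype.card_fin, smul_eq_mul, mul_one] at this
  omega

lemma mem_piAntidiag_filter_support_iff {α : Type*} [DecidableEq α] {s A : Finset α}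
    (hA : A ⊆ s) {n : ℕ} {v : α → ℕ} :
    v ∈ {v ∈ s.piAntidiag n | {a ∈ s | v a ≠ 0} = A} ↔
      ∑ a ∈ A, v a = n ∧ ∀ a, v a ≠ 0 ↔ a ∈ A := by
  rw [mem_filter, mem_piAntidiag, ← sum_filter_ne_zero (s := s)]
  constructor
  · rintro ⟨⟨hsum, hs⟩, rfl⟩
    exact ⟨hsum, fun a ↦ by simpa using hs a⟩
  · rintro ⟨hsum, hA'⟩
    have hfilter : {a ∈ s | v a ≠ 0} = A := Finset.ext fun a ↦ by
      simpa [← hA'] using fun h ↦ hA ((hA' a).1 h)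
    exact ⟨⟨by rwa [hfilter], fun a ha ↦ hA ((hA' a).1 ha)⟩, hfilter⟩

/-- Listing the values of `v` on its support `A` in increasing order of the index is a bijection
onto `posTuples #A n`, with inverse `Function.extend`. -/
lemma sum_filter_support_eq_sum_posTuples {α M : Type*} [LinearOrder α] [AddCommMonoid M]
    {s A : Finset α} (hA : A ⊆ s) (n : ℕ) (H : (Fin #A → ℕ) → M) :
    ∑ v ∈ {v ∈ s.piAntidiag n | {a ∈ s | v a ≠ 0} = A}, H (v ∘ A.orderEmbOfFin rfl) =
      ∑ l ∈ posTuples #A n, H l := by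
  set σ := A.orderEmbOfFin rfl
  have hσ : ∀ a, a ∈ A ↔ ∃ t, σ t = a := fun a ↦ by
    rw [← Set.mem_range, A.range_orderEmbOfFin rfl, mem_coe]
  have hsumσ : ∀ v : α → ℕ, ∑ t, v (σ t) = ∑ a ∈ A, v a := A.sum_orderEmbOfFin
  have mem_posTuples : ∀ l, l ∈ posTuples #A n ↔ ∑ t, l t = n ∧ ∀ t, 0 < l t := by
    simp [posTuples, Finset.Nat.mem_antidiagonalTuple]
  refine sum_nbij' (· ∘ σ) (fun l ↦ Function.extend σ l 0) (fun v hv ↦ ?_) (fun l hl ↦ ?_)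
    (fun v hv ↦ ?_) (fun l _ ↦ Function.extend_comp σ.injective _ _) fun _ _ ↦ rfl
  · obtain ⟨hsum, hsupp⟩ := (mem_piAntidiag_filter_support_iff hA).1 hv
    exact (mem_posTuples _).2 ⟨(hsumσ v).trans hsum,
      fun t ↦ Nat.pos_of_ne_zero ((hsupp _).2 (A.orderEmbOfFin_mem rfl t))⟩
  · obtain ⟨hsum, hpos⟩ := (mem_posTuples l).1 hl
    refine (mem_piAntidiag_filter_support_iff hA).2
      ⟨by simpa [← hsumσ, σ.injective.extend_apply] using hsum, fun a ↦ ?_⟩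
    rw [hσ]
    constructor
    · intro ha
      by_contra h
      exact ha (Function.extend_apply' _ _ _ h)
    · rintro ⟨t, rfl⟩
      simpa [σ.injective.extend_apply] using (hpos t).ne'
  · obtain ⟨-, hsupp⟩ := (mem_piAntidiag_filter_support_iff hA).1 hv
    funext a
    by_cases ha : a ∈ A
    · obtain ⟨t, rfl⟩ := (hσ a).1 ha
      exact σ.injective.extend_apply _ _ t
    · rw [Function.extend_apply' _ _ _ fun h ↦ ha ((hσ a).2 h)]
      exact (not_not.1 fun h ↦ ha ((hsupp a).1 h)).symm

theorem sum_piAntidiag_eq_sum_choose_smul {α M : Type*} [LinearOrder α] [AddCommMonoid M]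
    (s : Finset α) (n : ℕ) (F : (α → ℕ) → M) (G : (k : ℕ) → (Fin k → ℕ) → M)
    (hFG : ∀ A ⊆ s, ∀ v ∈ A.piAntidiag n, (∀ a ∈ A, v a ≠ 0) →
      F v = G #A (v ∘ A.orderEmbOfFin rfl)) :
    ∑ v ∈ s.piAntidiag n, F v =
      ∑ k ∈ range (#s + 1), (#s).choose k • ∑ l ∈ posTuples k n, G k l := by
  rw [sum_powerset_apply_card (fun k ↦ ∑ l ∈ posTuples k n, G k l) |>.symm,
    ← sum_fiberwise_of_maps_to (g := fun v ↦ {a ∈ s | v a ≠ 0}) (t := s.powerset)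
      fun v _ ↦ by simp]
  refine sum_congr rfl fun A hA ↦ ?_
  rw [mem_powerset] at hA
  rw [← sum_filter_support_eq_sum_posTuples hA]
  refine sum_congr rfl fun v hv ↦ ?_
  obtain ⟨hsum, hsupp⟩ := (mem_piAntidiag_filter_support_iff hA).1 hv
  exact hFG A hA v (mem_piAntidiag.2 ⟨hsum, fun a ↦ (hsupp a).1⟩) fun a ↦ (hsupp a).2

theorem ProbabilityTheory.iIndepFun.integrable_finsetProd {ι : Type*} {μ : Measure Ω}
    {X : ι → Ω → ℝ} (hindep : iIndepFun X μ) (hmeas : ∀ i, Measurable (X i))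
    (hint : ∀ i, Integrable (X i) μ) (s : Finset ι) : Integrable (fun ω ↦ ∏ i ∈ s, X i ω) μ := by
  have := hindep.isProbabilityMeasure
  classical
  induction s using Finset.cons_induction with
  | empty => simp
  | cons a s ha ih =>
    have hindep' := (hindep.indepFun_finsetProd_of_notMem hmeas ha).symm
    rw [prod_fn] at hindep'
    simpa only [prod_cons, Pi.mul_def] using hindep'.integrable_mul (hint a) ih

def mixedMoment (Y : ℕ → Ω → ℝ) (n k r : ℕ) : ℝ :=
  ∑ l ∈ posTuples k n, (Nat.multinomial univ l : ℝ) * ∫ ω, S Y k ω ^ r * ∏ i : Fin k, Y i ω ^ l i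

section IID

variable {Y : ℕ → Ω → ℝ} {Y₀ : Ω → ℝ}

theorem integrable_eval_mvPolynomial (hMeas : ∀ i, Measurable (Y i))
    (hIndep : iIndepFun Y volume) (hId : ∀ i, IdentDistrib (Y i) Y₀ volume volume)
    (hInt : ∀ m : ℕ, Integrable fun ω ↦ Y₀ ω ^ m) (P : MvPolynomial ℕ ℝ) :
    Integrable fun ω ↦ MvPolynomial.eval (fun i ↦ Y i ω) P := by
  simp_rw [MvPolynomial.eval_eq]
  refine integrable_finsetSum _ fun d _ ↦ Integrable.const_mul ?_ _
  exact (hIndep.comp (fun i x ↦ x ^ d i) fun i ↦ measurable_id.pow_const _).integrable_finsetProd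
    (fun i ↦ (hMeas i).pow_const _)
    (fun i ↦ ((hId i).comp (measurable_id.pow_const (d i))).integrable_iff.2 (hInt (d i))) _

theorem identDistrib_comp_of_injective (hMeas : ∀ i, Measurable (Y i))
    (hIndep : iIndepFun Y volume) (hId : ∀ i, IdentDistrib (Y i) Y₀ volume volume)
    {k : ℕ} {σ : Fin k → ℕ} (hσ : σ.Injective) :
    IdentDistrib (fun ω t ↦ Y (σ t) ω) (fun ω (t : Fin k) ↦ Y t ω) volume volume where
  aemeasurable_fst := (measurable_pi_lambda _ fun t ↦ hMeas _).aemeasurable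
  aemeasurable_snd := (measurable_pi_lambda _ fun t ↦ hMeas _).aemeasurable
  map_eq := by
    rw [(hIndep.precomp hσ).map_fun_eq_pi_map fun t ↦ (hMeas _).aemeasurable,
      (hIndep.precomp Fin.val_injective).map_fun_eq_pi_map fun t ↦ (hMeas _).aemeasurable]
    simp_rw [(hId _).map_eq]

theorem integral_sum_pow_mul_prod_eq_S (hMeas : ∀ i, Measurable (Y i))
    (hIndep : iIndepFun Y volume) (hId : ∀ i, IdentDistrib (Y i) Y₀ volume volume)
    (A : Finset ℕ) (r : ℕ) (v : ℕ → ℕ) :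
    ∫ ω, (∑ a ∈ A, Y a ω) ^ r * ∏ a ∈ A, Y a ω ^ v a =
      ∫ ω, S Y #A ω ^ r * ∏ t : Fin #A, Y t ω ^ v (A.orderEmbOfFin rfl t) := by
  have := (identDistrib_comp_of_injective hMeas hIndep hId (A.orderEmbOfFin rfl).injective).comp
    (u := fun z ↦ (∑ t, z t) ^ r * ∏ t, z t ^ v (A.orderEmbOfFin rfl t)) (by fun_prop)
  simp_rw [S, ← Fin.sum_univ_eq_sum_range, ← sum_orderEmbOfFin A, ← prod_orderEmbOfFin A]
  exact this.integral_eq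

theorem integral_sum_pow_eq_moment_S (hMeas : ∀ i, Measurable (Y i))
    (hIndep : iIndepFun Y volume) (hId : ∀ i, IdentDistrib (Y i) Y₀ volume volume)
    (A : Finset ℕ) (r : ℕ) :
    ∫ ω, (∑ a ∈ A, Y a ω) ^ r = moment (S Y #A) r volume := by
  simpa [moment] using integral_sum_pow_mul_prod_eq_S hMeas hIndep hId A r 0

theorem integral_mul_of_disjoint (hMeas : ∀ i, Measurable (Y i)) (hIndep : iIndepFun Y volume)
    {T A : Finset ℕ} (hTA : Disjoint T A) (j r : ℕ) (v : ℕ → ℕ) :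
    ∫ ω, (∑ a ∈ T, Y a ω) ^ j * ((∑ a ∈ A, Y a ω) ^ r * ∏ a ∈ A, Y a ω ^ v a) =
      (∫ ω, (∑ a ∈ T, Y a ω) ^ j) * ∫ ω, (∑ a ∈ A, Y a ω) ^ r * ∏ a ∈ A, Y a ω ^ v a := by
  have := (hIndep.indepFun_finset T A hTA hMeas).comp
    (show Measurable fun z : T → ℝ ↦ (∑ a, z a) ^ j by fun_prop)
    (show Measurable fun z : A → ℝ ↦ (∑ a, z a) ^ r * ∏ a, z a ^ v a by fun_prop)
  simp_rw [← sum_coe_sort T, ← sum_coe_sort A, ← prod_coe_sort A]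
  exact this.integral_fun_mul_eq_mul_integral (by fun_prop) (by fun_prop)

theorem integral_S_pow_mul_prod_of_support_subset (hMeas : ∀ i, Measurable (Y i))
    (hIndep : iIndepFun Y volume) (hId : ∀ i, IdentDistrib (Y i) Y₀ volume volume)
    (hInt : ∀ m : ℕ, Integrable fun ω ↦ Y₀ ω ^ m) {i : ℕ} {A : Finset ℕ} (hA : A ⊆ range i)
    (m : ℕ) {v : ℕ → ℕ} (hv : ∀ a, v a ≠ 0 → a ∈ A) :
    ∫ ω, S Y i ω ^ m * ∏ a ∈ range i, Y a ω ^ v a =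
      ∑ j ∈ range (m + 1), m.choose j * moment (S Y (i - #A)) j volume *
        ∫ ω, S Y #A ω ^ (m - j) * ∏ t : Fin #A, Y t ω ^ v (A.orderEmbOfFin rfl t) := by
  have hsplit : ∀ ω, S Y i ω ^ m * ∏ a ∈ range i, Y a ω ^ v a =
      ∑ j ∈ range (m + 1), (m.choose j : ℝ) * ((∑ a ∈ range i \ A, Y a ω) ^ j *
        ((∑ a ∈ A, Y a ω) ^ (m - j) * ∏ a ∈ A, Y a ω ^ v a)) := by
    intro ω
    rw [S, ← sum_sdiff hA, add_pow, sum_mul,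
      ← prod_subset hA fun a _ ha ↦ by rw [not_not.1 (mt (hv a) ha), pow_zero]]
    exact sum_congr rfl fun j _ ↦ by ring
  simp_rw [hsplit]
  rw [integral_finsetSum _ fun j _ ↦ ?_]
  · refine sum_congr rfl fun j _ ↦ ?_
    rw [integral_const_mul, integral_mul_of_disjoint hMeas hIndep sdiff_disjoint,
      integral_sum_pow_eq_moment_S hMeas hIndep hId,
      integral_sum_pow_mul_prod_eq_S hMeas hIndep hId,
      card_sdiff_of_subset hA, card_range]
    ring
  · open MvPolynomial in
    have h := integrable_eval_mvPolynomial hMeas hIndep hId hInt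
      (C (m.choose j : ℝ) * ((∑ a ∈ range i \ A, X a) ^ j *
        ((∑ a ∈ A, X a) ^ (m - j) * ∏ a ∈ A, X a ^ v a)))
    simpa only [map_mul, map_pow, map_sum, map_prod, eval_X, eval_C] using h

theorem moment_S_add_eq_sum_piAntidiag (hMeas : ∀ i, Measurable (Y i))
    (hIndep : iIndepFun Y volume) (hId : ∀ i, IdentDistrib (Y i) Y₀ volume volume)
    (hInt : ∀ m : ℕ, Integrable fun ω ↦ Y₀ ω ^ m) (i m n : ℕ) :
    moment (S Y i) (m + n) volume = ∑ v ∈ (range i).piAntidiag n,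
      (Nat.multinomial (range i) v : ℝ) * ∫ ω, S Y i ω ^ m * ∏ a ∈ range i, Y a ω ^ v a := by
  have hpow : ∀ ω, S Y i ω ^ (m + n) = ∑ v ∈ (range i).piAntidiag n,
      (Nat.multinomial (range i) v : ℝ) * (S Y i ω ^ m * ∏ a ∈ range i, Y a ω ^ v a) := by
    intro ω
    rw [pow_add, show S Y i ω ^ n = _ from sum_pow_eq_sum_piAntidiag _ _ n, mul_sum]
    exact sum_congr rfl fun _ _ ↦ by ring
  simp only [moment, Pi.pow_apply, hpow]
  rw [integral_finsetSum _ fun v _ ↦ ?_]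
  · exact sum_congr rfl fun _ _ ↦ integral_const_mul _ _
  · open MvPolynomial in
    have h := integrable_eval_mvPolynomial hMeas hIndep hId hInt
      (C (Nat.multinomial (range i) v : ℝ) * ((∑ a ∈ range i, X a) ^ m *
        ∏ a ∈ range i, X a ^ v a))
    simpa only [map_mul, map_pow, map_sum, map_prod, eval_X, eval_C, S] using h

theorem moment_S_add_eq_sum (hMeas : ∀ i, Measurable (Y i))
    (hIndep : iIndepFun Y volume) (hId : ∀ i, IdentDistrib (Y i) Y₀ volume volume)
    (hInt : ∀ m : ℕ, Integrable fun ω ↦ Y₀ ω ^ m) (i m n : ℕ) :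
    moment (S Y i) (m + n) volume = ∑ k ∈ range (n + 1), ∑ j ∈ range (m + 1),
      m.choose j * mixedMoment Y n k (m - j) * (i.choose k * moment (S Y (i - k)) j volume) := by
  rw [moment_S_add_eq_sum_piAntidiag hMeas hIndep hId hInt,
    sum_piAntidiag_eq_sum_choose_smul (range i) n _
    (fun k l ↦ (Nat.multinomial univ l : ℝ) * ∑ j ∈ range (m + 1),
      m.choose j * moment (S Y (i - k)) j volume *
        ∫ ω, S Y k ω ^ (m - j) * ∏ t : Fin k, Y t ω ^ l t)
    fun A hA v hv _ ↦ ?_]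
  · rw [card_range]
    refine sum_range_eq_sum_range_of_eq_zero (fun k hk ↦ ?_) |>.trans
      (sum_congr rfl fun k _ ↦ ?_)
    · rcases min_lt_iff.1 hk with hik | hnk
      · simp [Nat.choose_eq_zero_of_lt hik]
      · simp [posTuples_eq_empty hnk]
    · simp only [mixedMoment, nsmul_eq_mul, mul_sum, sum_mul]
      rw [sum_comm]
      exact sum_congr rfl fun _ _ ↦ sum_congr rfl fun _ _ ↦ by ring
  · rw [mem_piAntidiag] at hv
    rw [integral_S_pow_mul_prod_of_support_subset hMeas hIndep hId hInt hA m hv.2,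
      Nat.multinomial_comp_orderEmbOfFin, ← Nat.multinomial_congr_of_sdiff hA
        (fun a ha ↦ not_not.1 fun h ↦ (mem_sdiff.1 ha).2 (hv.2 a h)) fun _ _ ↦ rfl]
    rfl

theorem fwdDiff_iter_moment_S_eq_zero (hMeas : ∀ i, Measurable (Y i))
    (hIndep : iIndepFun Y volume) (hId : ∀ i, IdentDistrib (Y i) Y₀ volume volume)
    (hInt : ∀ m : ℕ, Integrable fun ω ↦ Y₀ ω ^ m) {n K : ℕ} (hnK : n < K) :
    (Δ_[1])^[K] (fun i ↦ moment (S Y i) n volume) 0 = 0 := by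
  have hexpand : (fun i ↦ moment (S Y i) n volume) =
      ∑ k ∈ range (n + 1), mixedMoment Y n k 0 • fun i ↦ (i.choose k : ℝ) := by
    have := hIndep.isProbabilityMeasure
    funext i
    simpa [moment, mul_comm] using moment_S_add_eq_sum hMeas hIndep hId hInt i 0 n
  rw [hexpand, fwdDiff_iter_finsetSum, Finset.sum_apply]
  refine sum_eq_zero fun k hk ↦ ?_
  rw [fwdDiff_iter_const_smul, Pi.smul_apply,
    fwdDiff_iter_choose_apply_zero_of_lt (by have := mem_range.1 hk; omega), smul_zero]

end IID

theorem probBivBell_recurrence_general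
    (Y : ℕ → Ω → ℝ) (Y₀ : Ω → ℝ)
    (hMeas : ∀ i, Measurable (Y i))
    (hIndep : iIndepFun Y volume)
    (hId : ∀ i, IdentDistrib (Y i) Y₀ volume volume)
    (hInt : ∀ m : ℕ, Integrable fun ω => (Y₀ ω) ^ m)
    (m n : ℕ) (x y : ℝ) :
    phiBiv Y (m + n) x y =
      ∑ k ∈ Finset.range (n + 1), ∑ j ∈ Finset.range (m + 1),
        (m.choose j : ℝ) * phiBiv Y j (x - (k : ℝ)) y * fallFac x k * y ^ k *
          ((k.factorial : ℝ))⁻¹ *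
          ∑ l ∈ posTuples k n,
            (Nat.multinomial Finset.univ l : ℝ) *
              ∫ ω, (S Y k ω) ^ (m - j) * ∏ i : Fin k, (Y i ω) ^ (l i) := by
  simp only [phiBiv_eq_newtonSum, funext (moment_S_add_eq_sum hMeas hIndep hId hInt · m n),
    newtonSum_sum, newtonSum_const_mul]
  refine sum_congr rfl fun k hk ↦ sum_congr rfl fun j hj ↦ ?_
  have hk : k ≤ n := Nat.lt_succ_iff.1 (mem_range.1 hk)
  have hj : j ≤ m := Nat.lt_succ_iff.1 (mem_range.1 hj)
  rw [newtonSum_choose_mul (fun i ↦ moment (S Y i) j volume) (by omega),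
    newtonSum_eq_of_le _ (by omega : j ≤ m + n - k) fun K hK ↦
      fwdDiff_iter_moment_S_eq_zero hMeas hIndep hId hInt hK,
    mixedMoment]
  ring

theorem probBivBell_recurrence
    [IsProbabilityMeasure (volume : Measure Ω)]
    (Y : ℕ → Ω → ℝ) (Y₀ : Ω → ℝ)
    (hMeas : ∀ i, Measurable (Y i))
    (hIndep : iIndepFun Y volume)
    (hId : ∀ i, IdentDistrib (Y i) Y₀ volume volume)
    (hInt : ∀ m : ℕ, Integrable fun ω => (Y₀ ω) ^ m)
    (m n : ℕ) (x y : ℝ) :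
    phiBiv Y (m + n) x y =
      ∑ k ∈ Finset.range (n + 1), ∑ j ∈ Finset.range (m + 1),
        (m.choose j : ℝ) * phiBiv Y j (x - (k : ℝ)) y * fallFac x k * y ^ k *
          ((k.factorial : ℝ))⁻¹ *
          ∑ l ∈ posTuples k n,
            (Nat.multinomial Finset.univ l : ℝ) *
              ∫ ω, (S Y k ω) ^ (m - j) * ∏ i : Fin k, (Y i ω) ^ (l i) :=
  probBivBell_recurrence_general Y Y₀ hMeas hIndep hId hInt m n x y
end
end

section
/- For every nonnegative integer k, the following identity of formal power series over ℝ holds: (1/k!) · (G − 1)^k = Σ_{n≥0} {n brace k}_Y · t^n / n!, where G = Σ_{n≥0} E[Y^n] t^n / n! is the formal moment series of Y. Equivalently, for all n ≥ 0, the coefficient of t^n in (1/k!)·(G − 1)^k multiplied by n! equals {n brace k}_Y (which vanishes for n < k). -/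
open MeasureTheory ProbabilityTheory Finset

noncomputable section

variable {Ω : Type*} [MeasureSpace Ω]

/-- The formal moment series `G = ∑_{n≥0} E[Y₀^n] t^n / n!` of `Y₀`. -/
def momentSeries (Y₀ : Ω → ℝ) : PowerSeries ℝ :=
  PowerSeries.mk fun n => (∫ ω, (Y₀ ω) ^ n) / (n.factorial : ℝ)

/-! The moment series of a sum of independent random variables is the product of their moment
series: the binomial expansion of `E[(X + Z)^n]`, with independence splitting each term, is
exactly the product rule for exponential generating functions. Hence the moment series of `S_i`
is `G^i`, and expanding `(G - 1)^k` by the binomial theorem reproduces, coefficient by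
coefficient, the alternating sum defining `{n brace k}_Y`. -/

open PowerSeries
open scoped Nat

theorem mk_div_factorial_mul_mk_div_factorial {K : Type*} [Field K] [CharZero K] (a b : ℕ → K) :
    (mk fun n => a n / n !) * (mk fun n => b n / n !) =
      mk fun n => (∑ p ∈ antidiagonal n, (n.choose p.1 : K) * a p.1 * b p.2) / n ! := by
  ext n
  rw [coeff_mul, coeff_mk, sum_div]
  refine sum_congr rfl fun p hp => ?_
  obtain rfl := mem_antidiagonal.mp hp
  have h := Nat.add_choose_mul_factorial_mul_factorial p.2 p.1
  rw [add_comm] at h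
  have hchoose : ((p.1 + p.2).choose p.1 : K) ≠ 0 :=
    Nat.cast_ne_zero.mpr (Nat.choose_pos (Nat.le_add_right _ _)).ne'
  simp only [coeff_mk]
  rw [← h]
  push_cast
  field_simp

theorem sub_one_pow_eq_sum_smul_pow {R A : Type*} [CommRing R] [Ring A] [Algebra R A]
    (x : A) (k : ℕ) :
    (x - 1) ^ k = ∑ i ∈ range (k + 1), ((k.choose i : R) * (-1) ^ (k - i)) • x ^ i := by
  rw [sub_eq_add_neg, (Commute.neg_one_right x).add_pow]
  refine sum_congr rfl fun i _ => ?_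
  rw [Algebra.smul_def, map_mul, map_natCast, map_pow, map_neg, map_one,
    ((Commute.neg_one_right x).pow_pow i (k - i)).eq, Nat.cast_comm, mul_assoc, mul_assoc,
    Nat.cast_comm]

theorem ProbabilityTheory.IdentDistrib.momentSeries_eq {Ω' : Type*} [MeasureSpace Ω']
    {X : Ω → ℝ} {X' : Ω' → ℝ} (h : IdentDistrib X X' volume volume) :
    momentSeries X = momentSeries X' := by
  ext n
  simp only [momentSeries, coeff_mk]
  congr 1
  exact (h.comp (measurable_id.pow_const n)).integral_eq

theorem ProbabilityTheory.IdentDistrib.integrable_pow {Ω' : Type*} [MeasureSpace Ω']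
    {X : Ω → ℝ} {X' : Ω' → ℝ} (h : IdentDistrib X X' volume volume)
    (hX' : ∀ n : ℕ, Integrable fun ω => X' ω ^ n) (n : ℕ) : Integrable fun ω => X ω ^ n :=
  (h.comp (measurable_id.pow_const n)).integrable_iff.mpr (hX' n)

theorem momentSeries_zero [IsProbabilityMeasure (volume : Measure Ω)] :
    momentSeries (0 : Ω → ℝ) = 1 := by
  ext n
  rcases n with _ | n <;> simp [momentSeries, coeff_one]

theorem ProbabilityTheory.IndepFun.pow_pow {μ : Measure Ω} {X Z : Ω → ℝ}
    (h : IndepFun X Z μ) (m n : ℕ) : IndepFun (fun ω => X ω ^ m) (fun ω => Z ω ^ n) μ :=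
  h.comp (measurable_id.pow_const m) (measurable_id.pow_const n)

section Independent

variable {X Z : Ω → ℝ}

theorem ProbabilityTheory.IndepFun.integrable_pow_add (hXZ : IndepFun X Z volume)
    (hX : ∀ n : ℕ, Integrable fun ω => X ω ^ n)
    (hZ : ∀ n : ℕ, Integrable fun ω => Z ω ^ n)
    (n : ℕ) : Integrable fun ω => (X ω + Z ω) ^ n := by
  simp_rw [add_pow]
  exact integrable_finsetSum _ fun m _ =>
    ((hXZ.pow_pow m _).integrable_mul (hX m) (hZ _)).mul_const _

theorem ProbabilityTheory.IndepFun.integral_pow_add (hXZ : IndepFun X Z volume)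
    (hX : ∀ n : ℕ, Integrable fun ω => X ω ^ n)
    (hZ : ∀ n : ℕ, Integrable fun ω => Z ω ^ n)
    (n : ℕ) :
    ∫ ω, (X ω + Z ω) ^ n =
      ∑ p ∈ antidiagonal n,
        (n.choose p.1 : ℝ) * (∫ ω, X ω ^ p.1) * ∫ ω, Z ω ^ p.2 := by
  have hexpand (ω : Ω) := (Commute.all (X ω) (Z ω)).add_pow' n
  simp_rw [hexpand, nsmul_eq_mul]
  rw [integral_finsetSum _ fun p _ =>
    ((hXZ.pow_pow p.1 p.2).integrable_mul (hX _) (hZ _)).const_mul _]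
  refine sum_congr rfl fun p _ => ?_
  rw [integral_const_mul, (hXZ.pow_pow _ _).integral_fun_mul_eq_mul_integral
    (hX _).aestronglyMeasurable (hZ _).aestronglyMeasurable, mul_assoc]

theorem ProbabilityTheory.IndepFun.momentSeries_add (hXZ : IndepFun X Z volume)
    (hX : ∀ n : ℕ, Integrable fun ω => X ω ^ n)
    (hZ : ∀ n : ℕ, Integrable fun ω => Z ω ^ n) :
    momentSeries (X + Z) = momentSeries X * momentSeries Z := by
  simp only [momentSeries, mk_div_factorial_mul_mk_div_factorial, Pi.add_apply,
    hXZ.integral_pow_add hX hZ]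

end Independent

theorem S_zero {α : Type*} (Y : ℕ → α → ℝ) : S Y 0 = 0 := by
  ext ω
  simp [S]

theorem S_succ {α : Type*} (Y : ℕ → α → ℝ) (i : ℕ) : S Y (i + 1) = S Y i + Y i := by
  ext ω
  simp [S, sum_range_succ]

section PartialSums

variable {Y : ℕ → Ω → ℝ} {Y₀ : Ω → ℝ}

theorem ProbabilityTheory.iIndepFun.indepFun_S (hIndep : iIndepFun Y volume)
    (hY : ∀ i, AEMeasurable (Y i) volume) (i : ℕ) : IndepFun (S Y i) (Y i) volume := by
  convert hIndep.indepFun_sum_range_succ₀ hY i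
  ext ω
  simp [S]

theorem integrable_pow_S (hIndep : iIndepFun Y volume)
    (hId : ∀ i, IdentDistrib (Y i) Y₀ volume volume)
    (hInt : ∀ m : ℕ, Integrable fun ω => (Y₀ ω) ^ m) [IsFiniteMeasure (volume : Measure Ω)]
    (i n : ℕ) : Integrable fun ω => S Y i ω ^ n := by
  induction i generalizing n with
  | zero => simp [S_zero]
  | succ i ih =>
    rw [S_succ]
    exact (hIndep.indepFun_S (fun j => (hId j).aemeasurable_fst) i).integrable_pow_add
      ih ((hId i).integrable_pow hInt) n

theorem momentSeries_S (hIndep : iIndepFun Y volume)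
    (hId : ∀ i, IdentDistrib (Y i) Y₀ volume volume)
    (hInt : ∀ m : ℕ, Integrable fun ω => (Y₀ ω) ^ m)
    [IsProbabilityMeasure (volume : Measure Ω)] (i : ℕ) :
    momentSeries (S Y i) = momentSeries Y₀ ^ i := by
  induction i with
  | zero => rw [S_zero, momentSeries_zero, pow_zero]
  | succ i ih =>
    rw [S_succ, (hIndep.indepFun_S (fun j => (hId j).aemeasurable_fst) i).momentSeries_add
      (integrable_pow_S hIndep hId hInt i) ((hId i).integrable_pow hInt), ih,
      (hId i).momentSeries_eq, pow_succ]

end PartialSums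

theorem mk_probStirling_div_factorial (Y : ℕ → Ω → ℝ) (k : ℕ) :
    (mk fun n => probStirling Y n k / n !) =
      (k ! : ℝ)⁻¹ •
        ∑ i ∈ range (k + 1),
          ((k.choose i : ℝ) * (-1) ^ (k - i)) • momentSeries (S Y i) := by
  ext n
  simp only [probStirling, momentSeries, coeff_mk, coeff_smul, map_sum, smul_eq_mul, mul_sum,
    sum_div]
  refine sum_congr rfl fun i _ => ?_
  ring

theorem probStirling_generatingFunction_general
    [IsProbabilityMeasure (volume : Measure Ω)]
    (Y : ℕ → Ω → ℝ) (Y₀ : Ω → ℝ)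
    (hIndep : iIndepFun Y volume)
    (hId : ∀ i, IdentDistrib (Y i) Y₀ volume volume)
    (hInt : ∀ m : ℕ, Integrable fun ω => (Y₀ ω) ^ m)
    (k : ℕ) :
    ((k.factorial : ℝ))⁻¹ • (momentSeries Y₀ - 1) ^ k =
      PowerSeries.mk fun n => probStirling Y n k / (n.factorial : ℝ) := by
  rw [mk_probStirling_div_factorial, sub_one_pow_eq_sum_smul_pow (R := ℝ)]
  simp_rw [momentSeries_S hIndep hId hInt]

theorem probStirling_generatingFunction
    [IsProbabilityMeasure (volume : Measure Ω)]
    (Y : ℕ → Ω → ℝ) (Y₀ : Ω → ℝ)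
    (hMeas : ∀ i, Measurable (Y i))
    (hIndep : iIndepFun Y volume)
    (hId : ∀ i, IdentDistrib (Y i) Y₀ volume volume)
    (hInt : ∀ m : ℕ, Integrable fun ω => (Y₀ ω) ^ m)
    (k : ℕ) :
    ((k.factorial : ℝ))⁻¹ • (momentSeries Y₀ - 1) ^ k =
      PowerSeries.mk fun n => probStirling Y n k / (n.factorial : ℝ) :=
  probStirling_generatingFunction_general Y Y₀ hIndep hId hInt k

end
end
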